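/- Let m, m̃ be nonzero real constants with m·m̃ = 1, and set η = (m + m̃)/2 and ρ = (m − m̃)/2. Let F(u, w, w̃) be a smooth real-valued function on an open set U ⊆ ℝ³. On the open set V = {(w, z, w̃, z̃) : z > 0, z̃ > 0, ((ln z)/(2m) − (ln z̃)/(2m̃), w, w̃) ∈ U}, define t = (ln z)/(2m) + (ln z̃)/(2m̃), u = (ln z)/(2m) − (ln z̃)/(2m̃), and Ω(w, z, w̃, z̃) = e^{ηt} F(u, w, w̃). Then Ω satisfies the first heavenly equation Ω_{wz̃}Ω_{zw̃} − Ω_{ww̃}Ω_{zz̃} = 1 everywhere on V if and only if F satisfies (η F_{w̃} + F_{uw̃})(η F_w − F_{uw}) − (η²F − F_{uu}) F_{ww̃} = 4 e^{2ρu} everywhere on U. -/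

import Mathlib

noncomputable section

/-- Partial derivatives of F(u, w, w̃) in its three arguments. -/
def pu (F : ℝ → ℝ → ℝ → ℝ) : ℝ → ℝ → ℝ → ℝ := fun u w wt => deriv (fun s => F s w wt) u
def pw (F : ℝ → ℝ → ℝ → ℝ) : ℝ → ℝ → ℝ → ℝ := fun u w wt => deriv (fun s => F u s wt) w
def pwt (F : ℝ → ℝ → ℝ → ℝ) : ℝ → ℝ → ℝ → ℝ := fun u w wt => deriv (fun s => F u w s) wt

/-- Partial derivatives of Ω(w, z, w̃, z̃) in its four arguments. -/
def qw (Ω : ℝ → ℝ → ℝ → ℝ → ℝ) : ℝ → ℝ → ℝ → ℝ → ℝ :=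
  fun w z wt zt => deriv (fun s => Ω s z wt zt) w
def qz (Ω : ℝ → ℝ → ℝ → ℝ → ℝ) : ℝ → ℝ → ℝ → ℝ → ℝ :=
  fun w z wt zt => deriv (fun s => Ω w s wt zt) z
def qwt (Ω : ℝ → ℝ → ℝ → ℝ → ℝ) : ℝ → ℝ → ℝ → ℝ → ℝ :=
  fun w z wt zt => deriv (fun s => Ω w z s zt) wt
def qzt (Ω : ℝ → ℝ → ℝ → ℝ → ℝ) : ℝ → ℝ → ℝ → ℝ → ℝ :=
  fun w z wt zt => deriv (fun s => Ω w z wt s) zt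

/-! With a = (ln z)/(2m) and b = (ln z̃)/(2m̃) the ansatz reads Ω = e^{η(a+b)} F(a − b, w, w̃).
On functions of this shape ∂_z = (2mz)⁻¹(η + ∂_u) and ∂_z̃ = (2m̃z̃)⁻¹(η − ∂_u), while ∂_w and ∂_w̃
act on F alone. Hence the four second derivatives of Ω are e^{ηt} times second-order expressions
in F, and after using the symmetry of mixed partials of F the heavenly expression becomes
e^{2ηt}/(4 m m̃ z z̃) times the left side of (EWred). Since m m̃ = 1 and 2ηt + 2ρu = ln z + ln z̃,
this factor is e^{−2ρu}/4. Every u is reached, e.g. by z = e^{2mu} and z̃ = 1. -/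

open Set

theorem HasDerivAt.congr_of_isOpen {X : Type*} [TopologicalSpace X] {φ ψ : ℝ → ℝ} {ψ' x : ℝ}
    {γ : ℝ → X} {U : Set X} (h : HasDerivAt ψ ψ' x) (hU : IsOpen U) (hγ : ContinuousAt γ x)
    (hx : γ x ∈ U) (hφ : ∀ s, γ s ∈ U → φ s = ψ s) : HasDerivAt φ ψ' x :=
  h.congr_of_eventuallyEq <| by
    filter_upwards [hγ.preimage_mem_nhds (hU.mem_nhds hx)] with s hs using hφ s hs

section DirDeriv

variable {E : Type*} [NormedAddCommGroup E] [NormedSpace ℝ E]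

def dirDeriv (v : E) (g : E → ℝ) : E → ℝ := fun q => fderiv ℝ g q v

theorem ContDiffOn.dirDeriv {m n : WithTop ℕ∞} {g : E → ℝ} {U : Set E} (hg : ContDiffOn ℝ n g U)
    (hU : IsOpen U) (hmn : m + 1 ≤ n) (v : E) : ContDiffOn ℝ m (dirDeriv v g) U :=
  (hg.fderiv_of_isOpen hU hmn).clm_apply contDiffOn_const

theorem dirDeriv_dirDeriv {g : E → ℝ} {q : E} (hg : DifferentiableAt ℝ (fderiv ℝ g) q) (v w : E) :
    dirDeriv w (dirDeriv v g) q = fderiv ℝ (fderiv ℝ g) q w v := by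
  change fderiv ℝ (fun y => fderiv ℝ g y v) q w = _
  simp [fderiv_clm_apply hg (differentiableAt_const v)]

theorem dirDeriv_comm {g : E → ℝ} {q : E} (hg : ContDiffAt ℝ 2 g q) (v w : E) :
    dirDeriv w (dirDeriv v g) q = dirDeriv v (dirDeriv w g) q := by
  have hg' : DifferentiableAt ℝ (fderiv ℝ g) q :=
    (hg.fderiv_right (m := 1) le_rfl).differentiableAt one_ne_zero
  rw [dirDeriv_dirDeriv hg', dirDeriv_dirDeriv hg', hg.isSymmSndFDerivAt (by simp)]

theorem dirDeriv_const_mul_sub {g h : E → ℝ} {q : E} (hg : DifferentiableAt ℝ g q)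
    (hh : DifferentiableAt ℝ h q) (a : ℝ) (v : E) :
    dirDeriv v (fun p => a * g p - h p) q = a * dirDeriv v g q - dirDeriv v h q := by
  simp [dirDeriv, fderiv_fun_sub (hg.const_mul a) hh, fderiv_const_mul hg]

end DirDeriv

section Slices

def uncurry3 (G : ℝ → ℝ → ℝ → ℝ) : ℝ × ℝ × ℝ → ℝ := fun p => G p.1 p.2.1 p.2.2

variable {U : Set (ℝ × ℝ × ℝ)} {G : ℝ → ℝ → ℝ → ℝ} {g : ℝ × ℝ × ℝ → ℝ}

theorem deriv_eq_dirDeriv_of_eqOn (hU : IsOpen U) (hg : DifferentiableOn ℝ g U) {φ : ℝ → ℝ}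
    {γ : ℝ → ℝ × ℝ × ℝ} {x : ℝ} {v : ℝ × ℝ × ℝ} (hγ : HasDerivAt γ v x) (hx : γ x ∈ U)
    (hφ : ∀ s, γ s ∈ U → φ s = g (γ s)) : deriv φ x = dirDeriv v g (γ x) :=
  ((hg.differentiableAt (hU.mem_nhds hx)).hasFDerivAt.comp_hasDerivAt x hγ
    |>.congr_of_isOpen hU hγ.continuousAt hx hφ).deriv

theorem eqOn_uncurry3_pu (hU : IsOpen U) (hg : DifferentiableOn ℝ g U)
    (hG : EqOn (uncurry3 G) g U) : EqOn (uncurry3 (pu G)) (dirDeriv (1, 0, 0) g) U := by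
  rintro ⟨u, w, wt⟩ hq
  exact deriv_eq_dirDeriv_of_eqOn hU hg (γ := fun s => (s, w, wt))
    ((hasDerivAt_id u).prodMk ((hasDerivAt_const u w).prodMk (hasDerivAt_const u wt))) hq
    fun _ hs => hG hs

theorem eqOn_uncurry3_pw (hU : IsOpen U) (hg : DifferentiableOn ℝ g U)
    (hG : EqOn (uncurry3 G) g U) : EqOn (uncurry3 (pw G)) (dirDeriv (0, 1, 0) g) U := by
  rintro ⟨u, w, wt⟩ hq
  exact deriv_eq_dirDeriv_of_eqOn hU hg (γ := fun s => (u, s, wt))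
    ((hasDerivAt_const w u).prodMk ((hasDerivAt_id w).prodMk (hasDerivAt_const w wt))) hq
    fun _ hs => hG hs

theorem eqOn_uncurry3_pwt (hU : IsOpen U) (hg : DifferentiableOn ℝ g U)
    (hG : EqOn (uncurry3 G) g U) : EqOn (uncurry3 (pwt G)) (dirDeriv (0, 0, 1) g) U := by
  rintro ⟨u, w, wt⟩ hq
  exact deriv_eq_dirDeriv_of_eqOn hU hg (γ := fun s => (u, w, s))
    ((hasDerivAt_const wt u).prodMk ((hasDerivAt_const wt w).prodMk (hasDerivAt_id wt))) hq
    fun _ hs => hG hs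

end Slices

def ewredLHS (η : ℝ) (F : ℝ → ℝ → ℝ → ℝ) (u w wt : ℝ) : ℝ :=
  (η * pwt F u w wt + pwt (pu F) u w wt) * (η * pw F u w wt - pw (pu F) u w wt)
    - (η ^ 2 * F u w wt - pu (pu F) u w wt) * pwt (pw F) u w wt

theorem ewredLHS_eq_dirDeriv {η : ℝ} {U : Set (ℝ × ℝ × ℝ)} {F : ℝ → ℝ → ℝ → ℝ} (hU : IsOpen U)
    (hF : ContDiffOn ℝ 2 (uncurry3 F) U) {u w wt : ℝ} (hq : (u, w, wt) ∈ U) :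
    ewredLHS η F u w wt =
      (η * dirDeriv (0, 0, 1) (uncurry3 F) (u, w, wt)
          + dirDeriv (0, 0, 1) (dirDeriv (1, 0, 0) (uncurry3 F)) (u, w, wt))
        * (η * dirDeriv (0, 1, 0) (uncurry3 F) (u, w, wt)
          - dirDeriv (0, 1, 0) (dirDeriv (1, 0, 0) (uncurry3 F)) (u, w, wt))
      - (η ^ 2 * uncurry3 F (u, w, wt)
          - dirDeriv (1, 0, 0) (dirDeriv (1, 0, 0) (uncurry3 F)) (u, w, wt))
        * dirDeriv (0, 0, 1) (dirDeriv (0, 1, 0) (uncurry3 F)) (u, w, wt) := by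
  have hF₁ : DifferentiableOn ℝ (uncurry3 F) U := hF.differentiableOn (by simp)
  have hD v : DifferentiableOn ℝ (dirDeriv v (uncurry3 F)) U :=
    (hF.dirDeriv hU (m := 1) le_rfl v).differentiableOn one_ne_zero
  have hu := eqOn_uncurry3_pu hU hF₁ (eqOn_refl _ _)
  have hw := eqOn_uncurry3_pw hU hF₁ (eqOn_refl _ _)
  rw [ewredLHS, show pwt F u w wt = _ from eqOn_uncurry3_pwt hU hF₁ (eqOn_refl _ _) hq,
    show pw F u w wt = _ from hw hq,
    show pu (pu F) u w wt = _ from eqOn_uncurry3_pu hU (hD _) hu hq,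
    show pw (pu F) u w wt = _ from eqOn_uncurry3_pw hU (hD _) hu hq,
    show pwt (pu F) u w wt = _ from eqOn_uncurry3_pwt hU (hD _) hu hq,
    show pwt (pw F) u w wt = _ from eqOn_uncurry3_pwt hU (hD _) hw hq]
  rfl

section Ansatz

def tCoord (m mt z zt : ℝ) : ℝ := Real.log z / (2 * m) + Real.log zt / (2 * mt)

def uCoord (m mt z zt : ℝ) : ℝ := Real.log z / (2 * m) - Real.log zt / (2 * mt)

def ansatz (m mt η : ℝ) (g : ℝ × ℝ × ℝ → ℝ) (w z wt zt : ℝ) : ℝ :=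
  Real.exp (η * tCoord m mt z zt) * g (uCoord m mt z zt, w, wt)

theorem hasDerivAt_exp_mul_comp {g : ℝ × ℝ × ℝ → ℝ} {τ μ : ℝ → ℝ} {τ' μ' x : ℝ} (η w wt : ℝ)
    (hτ : HasDerivAt τ τ' x) (hμ : HasDerivAt μ μ' x) (hg : DifferentiableAt ℝ g (μ x, w, wt)) :
    HasDerivAt (fun s => Real.exp (η * τ s) * g (μ s, w, wt))
      (Real.exp (η * τ x) * (η * τ' * g (μ x, w, wt) + μ' * dirDeriv (1, 0, 0) g (μ x, w, wt)))
      x := by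
  have hγ : HasDerivAt (fun s => (μ s, w, wt)) (μ' • ((1 : ℝ), (0 : ℝ), (0 : ℝ))) x := by
    simpa using hμ.prodMk ((hasDerivAt_const x w).prodMk (hasDerivAt_const x wt))
  refine (((hτ.const_mul η).exp).mul (hg.hasFDerivAt.comp_hasDerivAt x hγ)).congr_deriv ?_
  simp only [dirDeriv, map_smul, smul_eq_mul, Function.comp_apply]
  ring

variable {m mt η : ℝ} {g : ℝ × ℝ × ℝ → ℝ} {w z wt zt : ℝ}

theorem hasDerivAt_ansatz_w (hg : DifferentiableAt ℝ g (uCoord m mt z zt, w, wt)) :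
    HasDerivAt (fun s => ansatz m mt η g s z wt zt)
      (ansatz m mt η (dirDeriv (0, 1, 0) g) w z wt zt) w :=
  (hg.hasFDerivAt.comp_hasDerivAt w ((hasDerivAt_const w _).prodMk
    ((hasDerivAt_id w).prodMk (hasDerivAt_const w wt)))).const_mul _

theorem hasDerivAt_ansatz_wt (hg : DifferentiableAt ℝ g (uCoord m mt z zt, w, wt)) :
    HasDerivAt (fun s => ansatz m mt η g w z s zt)
      (ansatz m mt η (dirDeriv (0, 0, 1) g) w z wt zt) wt :=
  (hg.hasFDerivAt.comp_hasDerivAt wt ((hasDerivAt_const wt _).prodMk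
    ((hasDerivAt_const wt w).prodMk (hasDerivAt_id wt)))).const_mul _

theorem hasDerivAt_ansatz_z (hz : z ≠ 0) (hg : DifferentiableAt ℝ g (uCoord m mt z zt, w, wt)) :
    HasDerivAt (fun s => ansatz m mt η g w s wt zt)
      ((2 * m * z)⁻¹ * ansatz m mt η (fun p => η * g p + dirDeriv (1, 0, 0) g p) w z wt zt) z := by
  have hℓ := (Real.hasDerivAt_log hz).div_const (2 * m)
  refine (hasDerivAt_exp_mul_comp (τ := fun s => tCoord m mt s zt) (μ := fun s => uCoord m mt s zt)
    η w wt (hℓ.add_const _) (hℓ.sub_const _) hg).congr_deriv ?_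
  simp only [ansatz]
  ring

theorem hasDerivAt_ansatz_zt (hzt : zt ≠ 0) (hg : DifferentiableAt ℝ g (uCoord m mt z zt, w, wt)) :
    HasDerivAt (fun s => ansatz m mt η g w z wt s)
      ((2 * mt * zt)⁻¹ * ansatz m mt η (fun p => η * g p - dirDeriv (1, 0, 0) g p) w z wt zt)
      zt := by
  have hℓ := (Real.hasDerivAt_log hzt).div_const (2 * mt)
  refine (hasDerivAt_exp_mul_comp (τ := fun s => tCoord m mt z s) (μ := fun s => uCoord m mt z s)
    η w wt (hℓ.const_add _) (hℓ.const_sub _) hg).congr_deriv ?_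
  simp only [ansatz]
  ring

end Ansatz

section SecondDerivatives

variable {m mt η : ℝ} {U : Set (ℝ × ℝ × ℝ)} {g : ℝ × ℝ × ℝ → ℝ} {w z wt zt : ℝ}

theorem continuousAt_uCoord_left (hz : z ≠ 0) : ContinuousAt (fun s => uCoord m mt s zt) z :=
  ((Real.continuousAt_log hz).div_const _).sub_const _

theorem qw_qzt_ansatz (hU : IsOpen U) (hg : DifferentiableOn ℝ g U)
    (hg₁ : DifferentiableAt ℝ (dirDeriv (1, 0, 0) g) (uCoord m mt z zt, w, wt)) (hzt : zt ≠ 0)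
    (hq : (uCoord m mt z zt, w, wt) ∈ U) :
    qw (qzt (ansatz m mt η g)) w z wt zt = (2 * mt * zt)⁻¹ * ansatz m mt η
      (fun p => η * dirDeriv (0, 1, 0) g p - dirDeriv (0, 1, 0) (dirDeriv (1, 0, 0) g) p)
      w z wt zt := by
  have hg₀ := hg.differentiableAt (hU.mem_nhds hq)
  have hslice : ∀ s, (uCoord m mt z zt, s, wt) ∈ U → qzt (ansatz m mt η g) s z wt zt =
      (2 * mt * zt)⁻¹ * ansatz m mt η (fun p => η * g p - dirDeriv (1, 0, 0) g p) s z wt zt :=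
    fun s hs => (hasDerivAt_ansatz_zt hzt (hg.differentiableAt (hU.mem_nhds hs))).deriv
  refine (((hasDerivAt_ansatz_w ((hg₀.const_mul η).fun_sub hg₁)).const_mul _).congr_of_isOpen hU
    (by fun_prop) hq hslice).deriv.trans ?_
  simp only [ansatz, dirDeriv_const_mul_sub hg₀ hg₁]

theorem qz_qwt_ansatz (hU : IsOpen U) (hg : DifferentiableOn ℝ g U)
    (hg₃ : DifferentiableAt ℝ (dirDeriv (0, 0, 1) g) (uCoord m mt z zt, w, wt)) (hz : z ≠ 0)
    (hq : (uCoord m mt z zt, w, wt) ∈ U) :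
    qz (qwt (ansatz m mt η g)) w z wt zt = (2 * m * z)⁻¹ * ansatz m mt η
      (fun p => η * dirDeriv (0, 0, 1) g p + dirDeriv (1, 0, 0) (dirDeriv (0, 0, 1) g) p)
      w z wt zt :=
  ((hasDerivAt_ansatz_z hz hg₃).congr_of_isOpen hU
    ((continuousAt_uCoord_left hz).prodMk continuousAt_const) hq
    fun _ hs => (hasDerivAt_ansatz_wt (hg.differentiableAt (hU.mem_nhds hs))).deriv).deriv

theorem qw_qwt_ansatz (hU : IsOpen U) (hg : DifferentiableOn ℝ g U)
    (hg₃ : DifferentiableAt ℝ (dirDeriv (0, 0, 1) g) (uCoord m mt z zt, w, wt))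
    (hq : (uCoord m mt z zt, w, wt) ∈ U) :
    qw (qwt (ansatz m mt η g)) w z wt zt =
      ansatz m mt η (dirDeriv (0, 1, 0) (dirDeriv (0, 0, 1) g)) w z wt zt :=
  ((hasDerivAt_ansatz_w hg₃).congr_of_isOpen hU (by fun_prop) hq
    fun _ hs => (hasDerivAt_ansatz_wt (hg.differentiableAt (hU.mem_nhds hs))).deriv).deriv

theorem qz_qzt_ansatz (hU : IsOpen U) (hg : DifferentiableOn ℝ g U)
    (hg₁ : DifferentiableAt ℝ (dirDeriv (1, 0, 0) g) (uCoord m mt z zt, w, wt)) (hz : z ≠ 0)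
    (hzt : zt ≠ 0) (hq : (uCoord m mt z zt, w, wt) ∈ U) :
    qz (qzt (ansatz m mt η g)) w z wt zt = (2 * mt * zt)⁻¹ * ((2 * m * z)⁻¹ * ansatz m mt η
      (fun p => η ^ 2 * g p - dirDeriv (1, 0, 0) (dirDeriv (1, 0, 0) g) p) w z wt zt) := by
  have hg₀ := hg.differentiableAt (hU.mem_nhds hq)
  have hslice : ∀ s, (uCoord m mt s zt, w, wt) ∈ U → qzt (ansatz m mt η g) w s wt zt =
      (2 * mt * zt)⁻¹ * ansatz m mt η (fun p => η * g p - dirDeriv (1, 0, 0) g p) w s wt zt :=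
    fun s hs => (hasDerivAt_ansatz_zt hzt (hg.differentiableAt (hU.mem_nhds hs))).deriv
  refine (((hasDerivAt_ansatz_z hz ((hg₀.const_mul η).fun_sub hg₁)).const_mul _).congr_of_isOpen hU
    ((continuousAt_uCoord_left hz).prodMk continuousAt_const) hq hslice).deriv.trans ?_
  simp only [ansatz, dirDeriv_const_mul_sub hg₀ hg₁]
  ring

end SecondDerivatives

def heavenlyLHS (Ω : ℝ → ℝ → ℝ → ℝ → ℝ) (w z wt zt : ℝ) : ℝ :=
  qw (qzt Ω) w z wt zt * qz (qwt Ω) w z wt zt - qw (qwt Ω) w z wt zt * qz (qzt Ω) w z wt zt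

theorem exp_uCoord_mul_exp_tCoord_sq {m mt z zt : ℝ} (hm : m ≠ 0) (hmt : mt ≠ 0) (hz : 0 < z)
    (hzt : 0 < zt) :
    Real.exp ((m - mt) * uCoord m mt z zt) * Real.exp ((m + mt) / 2 * tCoord m mt z zt) ^ 2
      = z * zt := by
  rw [sq, ← Real.exp_add, ← Real.exp_add, ← Real.exp_log (mul_pos hz hzt),
    Real.log_mul hz.ne' hzt.ne']
  congr 1
  simp only [uCoord, tCoord]
  field_simp
  ring

theorem heavenlyLHS_ansatz {m mt η : ℝ} {U : Set (ℝ × ℝ × ℝ)} (hU : IsOpen U)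
    {F : ℝ → ℝ → ℝ → ℝ} (hF : ContDiffOn ℝ 2 (uncurry3 F) U) {w z wt zt : ℝ} (hz : z ≠ 0)
    (hzt : zt ≠ 0) (hq : (uCoord m mt z zt, w, wt) ∈ U) :
    heavenlyLHS (ansatz m mt η (uncurry3 F)) w z wt zt =
      (2 * m * z)⁻¹ * (2 * mt * zt)⁻¹ * Real.exp (η * tCoord m mt z zt) ^ 2 *
        ewredLHS η F (uCoord m mt z zt) w wt := by
  have hF₁ : DifferentiableOn ℝ (uncurry3 F) U := hF.differentiableOn (by simp)
  have hD v : DifferentiableAt ℝ (dirDeriv v (uncurry3 F)) (uCoord m mt z zt, w, wt) :=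
    ((hF.dirDeriv hU (m := 1) le_rfl v).differentiableOn one_ne_zero).differentiableAt
      (hU.mem_nhds hq)
  have hF₂ : ContDiffAt ℝ 2 (uncurry3 F) (uCoord m mt z zt, w, wt) := hF.contDiffAt (hU.mem_nhds hq)
  rw [heavenlyLHS, ewredLHS_eq_dirDeriv hU hF hq, qw_qzt_ansatz hU hF₁ (hD _) hzt hq,
    qz_qwt_ansatz hU hF₁ (hD _) hz hq, qw_qwt_ansatz hU hF₁ (hD _) hq,
    qz_qzt_ansatz hU hF₁ (hD _) hz hzt hq]
  simp only [ansatz]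
  rw [dirDeriv_comm hF₂ (0, 0, 1) (1, 0, 0), dirDeriv_comm hF₂ (0, 0, 1) (0, 1, 0)]
  ring

theorem four_mul_exp_mul_heavenlyLHS_ansatz {m mt η ρ : ℝ} (hm : m ≠ 0) (hmt : mt ≠ 0)
    (hmmt : m * mt = 1) (hη : η = (m + mt) / 2) (hρ : ρ = (m - mt) / 2) {U : Set (ℝ × ℝ × ℝ)}
    (hU : IsOpen U) {F : ℝ → ℝ → ℝ → ℝ} (hF : ContDiffOn ℝ 2 (uncurry3 F) U) {w z wt zt : ℝ}
    (hz : 0 < z) (hzt : 0 < zt) (hq : (uCoord m mt z zt, w, wt) ∈ U) :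
    4 * Real.exp (2 * ρ * uCoord m mt z zt) * heavenlyLHS (ansatz m mt η (uncurry3 F)) w z wt zt
      = ewredLHS η F (uCoord m mt z zt) w wt := by
  have h := exp_uCoord_mul_exp_tCoord_sq hm hmt hz hzt
  rw [← hη, show m - mt = 2 * ρ by rw [hρ]; ring] at h
  have hexp : 4 * Real.exp (2 * ρ * uCoord m mt z zt) *
      ((2 * m * z)⁻¹ * (2 * mt * zt)⁻¹ * Real.exp (η * tCoord m mt z zt) ^ 2) = 1 := by
    field_simp
    linear_combination 4 * h - 4 * z * zt * hmmt
  rw [heavenlyLHS_ansatz hU hF hz.ne' hzt.ne' hq]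
  linear_combination ewredLHS η F (uCoord m mt z zt) w wt * hexp

theorem heavenly_iff_EWred (m mt : ℝ) (hm : m ≠ 0) (hmt : mt ≠ 0) (hmmt : m * mt = 1)
    (η ρ : ℝ) (hη : η = (m + mt) / 2) (hρ : ρ = (m - mt) / 2)
    (U : Set (ℝ × ℝ × ℝ)) (hU : IsOpen U)
    (F : ℝ → ℝ → ℝ → ℝ)
    (hF : ContDiffOn ℝ (⊤ : ℕ∞) (fun p : ℝ × ℝ × ℝ => F p.1 p.2.1 p.2.2) U)
    (Ω : ℝ → ℝ → ℝ → ℝ → ℝ)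
    (hΩ : ∀ w z wt zt : ℝ, Ω w z wt zt =
      Real.exp (η * (Real.log z / (2 * m) + Real.log zt / (2 * mt))) *
        F (Real.log z / (2 * m) - Real.log zt / (2 * mt)) w wt) :
    (∀ w z wt zt : ℝ, 0 < z → 0 < zt →
        (Real.log z / (2 * m) - Real.log zt / (2 * mt), w, wt) ∈ U →
        qw (qzt Ω) w z wt zt * qz (qwt Ω) w z wt zt
          - qw (qwt Ω) w z wt zt * qz (qzt Ω) w z wt zt = 1)
    ↔ (∀ u w wt : ℝ, (u, w, wt) ∈ U →
        (η * pwt F u w wt + pwt (pu F) u w wt) * (η * pw F u w wt - pw (pu F) u w wt)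
          - (η ^ 2 * F u w wt - pu (pu F) u w wt) * pwt (pw F) u w wt
          = 4 * Real.exp (2 * ρ * u)) := by
  obtain rfl : Ω = ansatz m mt η (uncurry3 F) := by
    funext w z wt zt
    exact hΩ w z wt zt
  have hF₂ : ContDiffOn ℝ 2 (uncurry3 F) U := hF.of_le (WithTop.coe_le_coe.mpr le_top)
  have key {w z wt zt : ℝ} (hz : 0 < z) (hzt : 0 < zt) (hq : (uCoord m mt z zt, w, wt) ∈ U) :=
    four_mul_exp_mul_heavenlyLHS_ansatz hm hmt hmmt hη hρ hU hF₂ hz hzt hq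
  change (∀ w z wt zt, 0 < z → 0 < zt → (uCoord m mt z zt, w, wt) ∈ U →
      heavenlyLHS (ansatz m mt η (uncurry3 F)) w z wt zt = 1) ↔
    ∀ u w wt, (u, w, wt) ∈ U → ewredLHS η F u w wt = 4 * Real.exp (2 * ρ * u)
  constructor
  · intro h u w wt hq
    have hu : uCoord m mt (Real.exp (2 * m * u)) 1 = u := by
      rw [uCoord, Real.log_exp, Real.log_one, zero_div, sub_zero]
      field_simp
    rw [← hu] at hq ⊢
    rw [← key (Real.exp_pos _) one_pos hq, h _ _ _ _ (Real.exp_pos _) one_pos hq, mul_one]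
  · intro h w z wt zt hz hzt hq
    have := key hz hzt hq
    rw [h _ _ _ hq] at this
    exact mul_left_cancel₀ (by positivity) (this.trans (mul_one _).symm)

end
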